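/- Let φ : X → Y be a measurable mapping between σ-finite measure spaces, 1 < p < ∞ and 1 ≤ q, s ≤ ∞. Then f ∘ φ ∈ L_{p,q}(X) for every f ∈ L_{p,s}(Y) with ‖f ∘ φ‖_{p,q} ≤ K‖f‖_{p,s}, s ≤ q, for some constant K < ∞, if and only if μ(φ⁻¹(B)) ≤ K^p ν(B) for every measurable set B ∈ 𝓑. -/

import Mathlib

/-! On indicators the Lorentz norms are `‖1_A‖_{p,q} = μ(A)^{1/p}` for every second exponent `q`,
so the bound for `f = 1_B` is `μ(φ⁻¹B) ≤ K^p ν(B)`. Conversely, that inequality on the level sets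
`{|f| > λ}` gives `μ_{f∘φ} ≤ K^p ν_f`, hence `‖f ∘ φ‖_{p,q} ≤ K ‖f‖_{p,q}`, and
`‖f‖_{p,q} ≤ (q/s)^{1/q} ‖f‖_{p,s}` for `s ≤ q`: as `ν_f` is decreasing,
`λ ν_f(λ)^{1/p} ≤ ‖f‖_{p,s}`, so the `q`-th power of this function is at most
`‖f‖_{p,s}^{q-s}` times its `s`-th power. -/

open MeasureTheory Set ENNReal NNReal

/-- Distribution function `μ{x : |f(x)| > λ}` of a complex-valued function. -/
noncomputable def distribFn {X : Type*} [MeasurableSpace X] (μ : Measure X)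
    (f : X → ℂ) (lam : ℝ) : ℝ≥0∞ :=
  μ {x | lam < ‖f x‖}

/-- The Lorentz `(p,q)`-norm, `1 < p < ∞`, `1 ≤ q ≤ ∞`, computed via the
distribution function. -/
noncomputable def lorentzNorm {X : Type*} [MeasurableSpace X] (μ : Measure X)
    (p : ℝ) (q : ℝ≥0∞) (f : X → ℂ) : ℝ≥0∞ :=
  if q = ∞ then ⨆ lam ∈ Set.Ioi (0 : ℝ), ENNReal.ofReal lam * (distribFn μ f lam) ^ (1 / p)
  else (q * ∫⁻ lam in Set.Ioi (0 : ℝ),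
      (ENNReal.ofReal lam * (distribFn μ f lam) ^ (1 / p)) ^ q.toReal /
        ENNReal.ofReal lam) ^ (1 / q.toReal)

/-- Membership in the Lorentz space `L_{p,q}`. -/
def MemLorentz {X : Type*} [MeasurableSpace X] (μ : Measure X)
    (p : ℝ) (q : ℝ≥0∞) (f : X → ℂ) : Prop :=
  Measurable f ∧ lorentzNorm μ p q f < ∞

/-- The `L^q` norm on `(0, ∞)` for the Haar measure `dt / t`, scaled by `q^{1/q}` so that
`t ↦ t · 1_{t < 1}` has norm `1` for every `q`. -/
noncomputable def haarLqNorm (q : ℝ≥0∞) (F : ℝ → ℝ≥0∞) : ℝ≥0∞ :=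
  if q = ∞ then ⨆ t ∈ Ioi (0 : ℝ), F t
  else (q * ∫⁻ t in Ioi (0 : ℝ), F t ^ q.toReal / ENNReal.ofReal t) ^ (1 / q.toReal)

section haarLqNorm

variable {q : ℝ≥0∞} {F G : ℝ → ℝ≥0∞}

lemma haarLqNorm_top (F : ℝ → ℝ≥0∞) : haarLqNorm ∞ F = ⨆ t ∈ Ioi (0 : ℝ), F t := if_pos rfl

lemma haarLqNorm_of_ne_top (hq : q ≠ ∞) (F : ℝ → ℝ≥0∞) :
    haarLqNorm q F =
      (q * ∫⁻ t in Ioi (0 : ℝ), F t ^ q.toReal / ENNReal.ofReal t) ^ (1 / q.toReal) :=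
  if_neg hq

lemma haarLqNorm_congr (h : EqOn F G (Ioi 0)) : haarLqNorm q F = haarLqNorm q G := by
  rcases eq_or_ne q ∞ with rfl | hq
  · simp only [haarLqNorm_top]
    exact biSup_congr fun t ht => h ht
  · simp only [haarLqNorm_of_ne_top hq]
    rw [setLIntegral_congr_fun measurableSet_Ioi fun t ht => by rw [h ht]]

lemma haarLqNorm_le_mul (hq : q ≠ 0) {c : ℝ≥0} (h : ∀ t ∈ Ioi (0 : ℝ), F t ≤ c * G t) :
    haarLqNorm q F ≤ c * haarLqNorm q G := by
  rcases eq_or_ne q ∞ with rfl | hq_top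
  · simp only [haarLqNorm_top, ENNReal.mul_iSup]
    exact iSup₂_mono h
  have hq_pos : 0 < q.toReal := ENNReal.toReal_pos hq hq_top
  have hint : ∫⁻ t in Ioi (0 : ℝ), F t ^ q.toReal / ENNReal.ofReal t ≤
      (c : ℝ≥0∞) ^ q.toReal * ∫⁻ t in Ioi (0 : ℝ), G t ^ q.toReal / ENNReal.ofReal t := by
    rw [← lintegral_const_mul' _ _ (by finiteness)]
    refine setLIntegral_mono' measurableSet_Ioi fun t ht => ?_
    rw [← mul_div_assoc, ← ENNReal.mul_rpow_of_nonneg _ _ hq_pos.le]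
    gcongr
    exact h t ht
  simp only [haarLqNorm_of_ne_top hq_top]
  calc _ ≤ ((c : ℝ≥0∞) ^ q.toReal * (q * ∫⁻ t in Ioi (0 : ℝ), G t ^ q.toReal / ENNReal.ofReal t))
          ^ (1 / q.toReal) := by
        rw [mul_left_comm]
        gcongr
    _ = _ := by
        rw [ENNReal.mul_rpow_of_nonneg _ _ (by positivity), one_div,
          ENNReal.rpow_rpow_inv hq_pos.ne']

lemma mul_setLIntegral_Ioo_rpow_div {s : ℝ≥0∞} (hs : s ≠ 0) (hs_top : s ≠ ∞) {a : ℝ}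
    (ha : 0 ≤ a) :
    s * ∫⁻ t in Ioo 0 a, ENNReal.ofReal t ^ s.toReal / ENNReal.ofReal t =
      ENNReal.ofReal a ^ s.toReal := by
  have hs_pos : 0 < s.toReal := ENNReal.toReal_pos hs hs_top
  have hintegrand : EqOn (fun t => ENNReal.ofReal t ^ s.toReal / ENNReal.ofReal t)
      (fun t => ENNReal.ofReal (t ^ (s.toReal - 1))) (Ioo 0 a) := fun t ht => by
    dsimp only
    rw [ENNReal.ofReal_rpow_of_pos ht.1, ← ENNReal.ofReal_div_of_pos ht.1,
      Real.rpow_sub ht.1, Real.rpow_one]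
  have hintegrable : IntegrableOn (fun t : ℝ => t ^ (s.toReal - 1)) (Ioo 0 a) :=
    (intervalIntegrable_iff_integrableOn_Ioo_of_le ha).mp
      (intervalIntegral.intervalIntegrable_rpow' (by linarith))
  rw [setLIntegral_congr_fun measurableSet_Ioo hintegrand,
    ← ofReal_integral_eq_lintegral_ofReal hintegrable
      (ae_restrict_of_forall_mem measurableSet_Ioo fun t ht => Real.rpow_nonneg ht.1.le _),
    ← integral_Ioc_eq_integral_Ioo, ← intervalIntegral.integral_of_le ha,
    integral_rpow (Or.inl (by linarith)), sub_add_cancel, Real.zero_rpow hs_pos.ne', sub_zero,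
    ENNReal.ofReal_div_of_pos hs_pos, ENNReal.ofReal_toReal hs_top,
    ENNReal.mul_div_cancel hs hs_top, ENNReal.ofReal_rpow_of_nonneg ha hs_pos.le]

lemma haarLqNorm_ofReal_mul_ite (hq : q ≠ 0) (a : ℝ≥0∞) :
    haarLqNorm q (fun t => ENNReal.ofReal t * if t < 1 then a else 0) = a := by
  rcases eq_or_ne q ∞ with rfl | hq_top
  · rw [haarLqNorm_top]
    refine le_antisymm (iSup₂_le fun t _ => ?_) (ENNReal.le_of_forall_lt_one_mul_le fun b hb => ?_)
    · split_ifs with ht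
      · exact mul_le_of_le_one_left' (ENNReal.ofReal_le_one.2 ht.le)
      · simp
    rcases eq_or_ne b 0 with rfl | hb0
    · simp
    have hb_pos : 0 < b.toReal := ENNReal.toReal_pos hb0 hb.ne_top
    have hb_lt : b.toReal < 1 := ENNReal.toReal_lt_of_lt_ofReal (by simpa using hb)
    refine le_trans ?_ (le_iSup₂ (f := fun t (_ : t ∈ Ioi (0 : ℝ)) =>
      ENNReal.ofReal t * if t < 1 then a else 0) b.toReal hb_pos)
    simp [hb_lt, hb.ne_top]
  have hq_pos : 0 < q.toReal := ENNReal.toReal_pos hq hq_top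
  have hvanish : ∫⁻ t in Ici (1 : ℝ),
      (ENNReal.ofReal t * if t < 1 then a else 0) ^ q.toReal / ENNReal.ofReal t = 0 :=
    setLIntegral_eq_zero measurableSet_Ici fun t ht => by
      simp [not_lt.2 (mem_Ici.1 ht), ENNReal.zero_rpow_of_pos hq_pos]
  have hunit : ∫⁻ t in Ioo (0 : ℝ) 1,
      (ENNReal.ofReal t * if t < 1 then a else 0) ^ q.toReal / ENNReal.ofReal t =
      a ^ q.toReal * ∫⁻ t in Ioo (0 : ℝ) 1, ENNReal.ofReal t ^ q.toReal / ENNReal.ofReal t := by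
    rw [← lintegral_const_mul _ (by fun_prop)]
    refine setLIntegral_congr_fun measurableSet_Ioo fun t ht => ?_
    rw [if_pos ht.2, ENNReal.mul_rpow_of_nonneg _ _ hq_pos.le, mul_comm, mul_div_assoc]
  rw [haarLqNorm_of_ne_top hq_top, ← Ioo_union_Ici_eq_Ioi zero_lt_one,
    lintegral_union measurableSet_Ici ((Iio_disjoint_Ici le_rfl).mono_left Ioo_subset_Iio_self),
    hvanish, add_zero, hunit, mul_left_comm, mul_setLIntegral_Ioo_rpow_div hq hq_top zero_le_one,
    ENNReal.ofReal_one, ENNReal.one_rpow, mul_one, one_div, ENNReal.rpow_rpow_inv hq_pos.ne']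

lemma haarLqNorm_top_le {s : ℝ≥0∞} (hs : s ≠ 0) {h : ℝ → ℝ≥0∞} (hh : Antitone h) :
    haarLqNorm ∞ (fun t => ENNReal.ofReal t * h t) ≤
      haarLqNorm s (fun t => ENNReal.ofReal t * h t) := by
  rcases eq_or_ne s ∞ with rfl | hs_top
  · exact le_rfl
  have hs_pos : 0 < s.toReal := ENNReal.toReal_pos hs hs_top
  rw [haarLqNorm_top, haarLqNorm_of_ne_top hs_top, one_div]
  refine iSup₂_le fun a ha => (ENNReal.le_rpow_inv_iff hs_pos).2 ?_
  -- On `(0, a)` the integrand is at least `h(a)^s t^{s-1}`, whose integral is `h(a)^s a^s / s`.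
  calc (ENNReal.ofReal a * h a) ^ s.toReal
      = h a ^ s.toReal * (s * ∫⁻ t in Ioo 0 a, ENNReal.ofReal t ^ s.toReal / ENNReal.ofReal t) := by
        rw [mul_setLIntegral_Ioo_rpow_div hs hs_top (mem_Ioi.1 ha).le, mul_comm,
          ENNReal.mul_rpow_of_nonneg _ _ hs_pos.le]
    _ = s * ∫⁻ t in Ioo 0 a, h a ^ s.toReal * (ENNReal.ofReal t ^ s.toReal / ENNReal.ofReal t) := by
        rw [lintegral_const_mul _ (by fun_prop), mul_left_comm]
    _ ≤ s * ∫⁻ t in Ioo 0 a, (ENNReal.ofReal t * h t) ^ s.toReal / ENNReal.ofReal t := by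
        refine mul_le_mul_right (setLIntegral_mono' measurableSet_Ioo fun t ht => ?_) _
        rw [ENNReal.mul_rpow_of_nonneg _ _ hs_pos.le, mul_comm (ENNReal.ofReal t ^ s.toReal),
          mul_div_assoc]
        gcongr
        exact hh ht.2.le
    _ ≤ s * ∫⁻ t in Ioi 0, (ENNReal.ofReal t * h t) ^ s.toReal / ENNReal.ofReal t := by
        gcongr
        exact Ioo_subset_Ioi_self

lemma haarLqNorm_le_mul_haarLqNorm_of_le {s q : ℝ≥0∞} (hs : s ≠ 0) (hsq : s ≤ q)
    {h : ℝ → ℝ≥0∞} (hh : Antitone h) :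
    haarLqNorm q (fun t => ENNReal.ofReal t * h t) ≤
      (q / s) ^ (1 / q.toReal) * haarLqNorm s (fun t => ENNReal.ofReal t * h t) := by
  rcases eq_or_ne q ∞ with rfl | hq_top
  · simpa using haarLqNorm_top_le hs hh
  have hs_top : s ≠ ∞ := ne_top_of_le_ne_top hq_top hsq
  have hs_pos : 0 < s.toReal := ENNReal.toReal_pos hs hs_top
  have hq_pos : 0 < q.toReal := hs_pos.trans_le (ENNReal.toReal_mono hq_top hsq)
  have hqs : 0 ≤ q.toReal - s.toReal := sub_nonneg.2 (ENNReal.toReal_mono hq_top hsq)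
  have hh_meas : Measurable h := hh.measurable
  set F : ℝ → ℝ≥0∞ := fun t => ENNReal.ofReal t * h t
  set N := haarLqNorm s F with hN
  have hNs : N ^ s.toReal = s * ∫⁻ t in Ioi 0, F t ^ s.toReal / ENNReal.ofReal t := by
    rw [hN, haarLqNorm_of_ne_top hs_top, one_div, ENNReal.rpow_inv_rpow hs_pos.ne']
  have hFN : ∀ t ∈ Ioi (0 : ℝ), F t ≤ N := fun t ht =>
    le_trans (by rw [haarLqNorm_top]; exact le_iSup₂ (f := fun t (_ : t ∈ Ioi (0 : ℝ)) => F t) t ht)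
      (haarLqNorm_top_le hs hh)
  have hint : ∫⁻ t in Ioi 0, F t ^ q.toReal / ENNReal.ofReal t ≤
      N ^ (q.toReal - s.toReal) * ∫⁻ t in Ioi 0, F t ^ s.toReal / ENNReal.ofReal t := by
    rw [← lintegral_const_mul _ (by fun_prop)]
    refine setLIntegral_mono' measurableSet_Ioi fun t ht => ?_
    rw [← mul_div_assoc]
    gcongr
    calc F t ^ q.toReal = F t ^ s.toReal * F t ^ (q.toReal - s.toReal) := by
          rw [← ENNReal.rpow_add_of_nonneg _ _ hs_pos.le hqs, add_sub_cancel]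
      _ ≤ F t ^ s.toReal * N ^ (q.toReal - s.toReal) := by gcongr; exact hFN t ht
      _ = N ^ (q.toReal - s.toReal) * F t ^ s.toReal := mul_comm _ _
  rw [haarLqNorm_of_ne_top hq_top]
  calc _ ≤ (q / s * N ^ q.toReal) ^ (1 / q.toReal) := by
        refine ENNReal.rpow_le_rpow ?_ (by positivity)
        calc q * ∫⁻ t in Ioi 0, F t ^ q.toReal / ENNReal.ofReal t
            ≤ q * (N ^ (q.toReal - s.toReal) *
              ∫⁻ t in Ioi 0, F t ^ s.toReal / ENNReal.ofReal t) := mul_le_mul_right hint q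
          _ = q / s * (N ^ (q.toReal - s.toReal) * N ^ s.toReal) := by
            rw [hNs, mul_left_comm _ s, ← mul_assoc (q / s), ENNReal.div_mul_cancel hs hs_top]
          _ = q / s * N ^ q.toReal := by
            rw [← ENNReal.rpow_add_of_nonneg _ _ hqs hs_pos.le, sub_add_cancel]
    _ = (q / s) ^ (1 / q.toReal) * N := by
        rw [ENNReal.mul_rpow_of_nonneg _ _ (by positivity), one_div,
          ENNReal.rpow_rpow_inv hq_pos.ne']

end haarLqNorm

section lorentzNorm

variable {X Y : Type*} [MeasurableSpace X] [MeasurableSpace Y] {μ : Measure X} {ν : Measure Y}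
  {p : ℝ} {q s : ℝ≥0∞}

lemma lorentzNorm_eq_haarLqNorm (μ : Measure X) (p : ℝ) (q : ℝ≥0∞) (f : X → ℂ) :
    lorentzNorm μ p q f =
      haarLqNorm q (fun t => ENNReal.ofReal t * distribFn μ f t ^ (1 / p)) :=
  rfl

lemma antitone_distribFn_rpow (hp : 0 ≤ p) (μ : Measure X) (f : X → ℂ) :
    Antitone fun t => distribFn μ f t ^ (1 / p) := fun _ _ hab =>
  ENNReal.rpow_le_rpow (measure_mono fun _ hx => hab.trans_lt hx) (by positivity)

lemma lorentzNorm_le_mul_lorentzNorm_of_le (hp : 0 ≤ p) (hs : s ≠ 0) (hsq : s ≤ q)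
    (f : X → ℂ) :
    lorentzNorm μ p q f ≤ (q / s) ^ (1 / q.toReal) * lorentzNorm μ p s f :=
  haarLqNorm_le_mul_haarLqNorm_of_le hs hsq (antitone_distribFn_rpow hp μ f)

lemma lorentzNorm_le_of_distribFn_le (hp : 0 < p) (hq : q ≠ 0) {g : X → ℂ} {f : Y → ℂ}
    {c : ℝ≥0} (h : ∀ t, distribFn μ g t ≤ (c : ℝ≥0∞) ^ p * distribFn ν f t) :
    lorentzNorm μ p q g ≤ c * lorentzNorm ν p q f := by
  refine haarLqNorm_le_mul hq fun t _ => ?_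
  calc ENNReal.ofReal t * distribFn μ g t ^ (1 / p)
      ≤ ENNReal.ofReal t * ((c : ℝ≥0∞) ^ p * distribFn ν f t) ^ (1 / p) := by
        gcongr
        exact h t
    _ = c * (ENNReal.ofReal t * distribFn ν f t ^ (1 / p)) := by
        rw [ENNReal.mul_rpow_of_nonneg _ _ (by positivity), one_div,
          ENNReal.rpow_rpow_inv hp.ne', mul_left_comm]

lemma lorentzNorm_comp_le (hp : 0 < p) (hq : q ≠ 0) {φ : X → Y} {K : ℝ≥0}
    (hK : ∀ B, MeasurableSet B → μ (φ ⁻¹' B) ≤ (K : ℝ≥0∞) ^ p * ν B) {f : Y → ℂ}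
    (hf : Measurable f) :
    lorentzNorm μ p q (f ∘ φ) ≤ K * lorentzNorm ν p q f :=
  lorentzNorm_le_of_distribFn_le hp hq fun t =>
    hK {y | t < ‖f y‖} (measurableSet_lt measurable_const hf.norm)

lemma distribFn_indicator_one (A : Set X) {t : ℝ} (ht : 0 < t) :
    distribFn μ (A.indicator 1) t = if t < 1 then μ A else 0 := by
  have hlevel : {x | t < ‖A.indicator (1 : X → ℂ) x‖} = if t < 1 then A else ∅ := by
    ext x
    by_cases hx : x ∈ A <;> split_ifs <;> simp_all [not_lt.2 ht.le]
  rw [distribFn, hlevel]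
  split_ifs <;> simp

lemma lorentzNorm_indicator_one (hp : 0 < p) (hq : q ≠ 0) (A : Set X) :
    lorentzNorm μ p q (A.indicator 1) = μ A ^ (1 / p) := by
  rw [lorentzNorm_eq_haarLqNorm, ← haarLqNorm_ofReal_mul_ite hq (μ A ^ (1 / p))]
  refine haarLqNorm_congr fun t ht => ?_
  simp only [distribFn_indicator_one A ht, apply_ite (· ^ (1 / p)),
    ENNReal.zero_rpow_of_pos (one_div_pos.2 hp)]

lemma measure_preimage_le_of_lorentzNorm_comp_le (hp : 0 < p) (hq : q ≠ 0) (hs : s ≠ 0)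
    {φ : X → Y} {K : ℝ≥0}
    (hK : ∀ f : Y → ℂ, MemLorentz ν p s f → lorentzNorm μ p q (f ∘ φ) ≤ K * lorentzNorm ν p s f)
    {B : Set Y} (hB : MeasurableSet B) (hνB : ν B ≠ ∞) :
    μ (φ ⁻¹' B) ≤ (K : ℝ≥0∞) ^ p * ν B := by
  have hmem : MemLorentz ν p s (B.indicator 1) :=
    ⟨measurable_one.indicator hB, by
      rw [lorentzNorm_indicator_one hp hs]
      exact ENNReal.rpow_lt_top_of_nonneg (by positivity) hνB⟩
  have hcomp : B.indicator 1 ∘ φ = (φ ⁻¹' B).indicator (1 : X → ℂ) :=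
    funext fun _ => (indicator_comp_right φ).symm
  have hbound := hK _ hmem
  rw [hcomp, lorentzNorm_indicator_one hp hq, lorentzNorm_indicator_one hp hs] at hbound
  rwa [← ENNReal.rpow_le_rpow_iff (one_div_pos.2 hp),
    ENNReal.mul_rpow_of_nonneg _ _ (one_div_pos.2 hp).le, ← ENNReal.rpow_mul,
    mul_one_div_cancel hp.ne', ENNReal.rpow_one]

end lorentzNorm

lemma div_rpow_one_div_toReal_ne_top {s : ℝ≥0∞} (hs : s ≠ 0) (q : ℝ≥0∞) :
    (q / s) ^ (1 / q.toReal) ≠ ∞ := by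
  rcases eq_or_ne q ∞ with rfl | hq
  · simp
  · exact ENNReal.rpow_ne_top_of_nonneg (by positivity) (ENNReal.div_ne_top hq hs)

theorem boundedCompositionOperator_samePQ_iff_general
    {X Y : Type*} [MeasurableSpace X] [MeasurableSpace Y]
    (μ : Measure X) (ν : Measure Y)
    (φ : X → Y) (hφ : Measurable φ)
    (p : ℝ) (hp : 1 < p)
    (s q : ℝ≥0∞) (hs : 1 ≤ s) (hsq : s ≤ q) :
    (∃ K : ℝ≥0, (∀ f : Y → ℂ, MemLorentz ν p s f → MemLorentz μ p q (f ∘ φ)) ∧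
        ∀ f : Y → ℂ, MemLorentz ν p s f →
          lorentzNorm μ p q (f ∘ φ) ≤ (K : ℝ≥0∞) * lorentzNorm ν p s f) ↔
      (∃ K : ℝ≥0, ∀ B : Set Y, MeasurableSet B →
        μ (φ ⁻¹' B) ≤ (K : ℝ≥0∞) ^ p * ν B) := by
  have hp0 : 0 < p := zero_lt_one.trans hp
  have hs0 : s ≠ 0 := (zero_lt_one.trans_le hs).ne'
  have hq0 : q ≠ 0 := (zero_lt_one.trans_le (hs.trans hsq)).ne'
  constructor
  · rintro ⟨K, -, hK⟩
    -- Indicators of sets of infinite measure are not in `L_{p,s}`; for them the bound is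
    -- trivial once `K ≥ 1`.
    refine ⟨max K 1, fun B hB => ?_⟩
    rcases eq_or_ne (ν B) ∞ with hνB | hνB
    · rw [hνB, ENNReal.mul_top (by positivity)]
      exact le_top
    · calc μ (φ ⁻¹' B) ≤ (K : ℝ≥0∞) ^ p * ν B :=
            measure_preimage_le_of_lorentzNorm_comp_le hp0 hq0 hs0 hK hB hνB
        _ ≤ _ := by gcongr; exact le_max_left K 1
  · rintro ⟨K, hK⟩
    set C := (q / s) ^ (1 / q.toReal)
    have hbound : ∀ f : Y → ℂ, MemLorentz ν p s f →
        lorentzNorm μ p q (f ∘ φ) ≤ (K * C.toNNReal : ℝ≥0) * lorentzNorm ν p s f :=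
      fun f hf => calc
        _ ≤ K * lorentzNorm ν p q f := lorentzNorm_comp_le hp0 hq0 hK hf.1
        _ ≤ K * (C * lorentzNorm ν p s f) := by
            gcongr
            exact lorentzNorm_le_mul_lorentzNorm_of_le hp0.le hs0 hsq f
        _ = _ := by
            rw [ENNReal.coe_mul, ENNReal.coe_toNNReal (div_rpow_one_div_toReal_ne_top hs0 q),
              mul_assoc]
    exact ⟨_, fun f hf => ⟨hf.1.comp hφ, (hbound f hf).trans_lt
      (ENNReal.mul_lt_top ENNReal.coe_lt_top hf.2)⟩, hbound⟩

/-- `f ∘ φ ∈ L_{p,q}(X)` for every `f ∈ L_{p,s}(Y)` with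
`‖f ∘ φ‖_{p,q} ≤ K ‖f‖_{p,s}` (`s ≤ q`), for some constant `K < ∞`, if and only if
`μ(φ⁻¹(B)) ≤ K^p ν(B)` for every measurable set `B`. -/
theorem boundedCompositionOperator_samePQ_iff
    {X Y : Type*} [MeasurableSpace X] [MeasurableSpace Y]
    (μ : Measure X) (ν : Measure Y) [SigmaFinite μ] [SigmaFinite ν]
    (φ : X → Y) (hφ : Measurable φ)
    (p : ℝ) (hp : 1 < p)
    (s q : ℝ≥0∞) (hs : 1 ≤ s) (hsq : s ≤ q) :
    (∃ K : ℝ≥0, (∀ f : Y → ℂ, MemLorentz ν p s f → MemLorentz μ p q (f ∘ φ)) ∧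
        ∀ f : Y → ℂ, MemLorentz ν p s f →
          lorentzNorm μ p q (f ∘ φ) ≤ (K : ℝ≥0∞) * lorentzNorm ν p s f) ↔
      (∃ K : ℝ≥0, ∀ B : Set Y, MeasurableSet B →
        μ (φ ⁻¹' B) ≤ (K : ℝ≥0∞) ^ p * ν B) :=
  boundedCompositionOperator_samePQ_iff_general μ ν φ hφ p hp s q hs hsq
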